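/- arXiv:1608.03112 — 3 statements merged into one kernel-verified Lean document; each statement's English description precedes it below -/
import Mathlib

section
/- Let R be a commutative ring, r ≥ 1, V a free R-module of rank r, and L ⊆ V a submodule which is a direct summand of V, is free of rank 1, and such that V/L is free of rank r−1. Let ψ_1, …, ψ_{r−1} ∈ Hom_R(V, R) be linear functionals that vanish on L and whose induced functionals on V/L form an R-basis of Hom_R(V/L, R). Define Ψ : ⋀^r V → V as the linear map induced by the alternating multilinear map (v_1, …, v_r) ↦ Σ_{i=1}^r (−1)^{i+1} det(A_i) · v_i, where A_i is the (r−1)×(r−1) matrix whose (j,k)-entry is ψ_j(v_{σ_i(k)}), with σ_i the increasing enumeration of {1,…,r} \ {i}. Then Ψ is injective and its image is exactly L; in particular Ψ gives an R-module isomorphism ⋀^r V ≅ L. -/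
/-!
Applying a functional `φ` to `Ψ (v₀ ∧ ⋯ ∧ vₙ)` gives, by Laplace expansion along the first row,
the determinant of the matrix with rows `φ, ψ₀, …, ψₙ₋₁` evaluated at the `vᵢ`. For `φ = ψⱼ` two
rows agree, so every `ψⱼ` kills the image of `Ψ`; as the `ψⱼ` induce a basis of the dual of the
free module `V ⧸ L`, the image lies in `L`. Conversely, if `x ∈ L` and `u₀, …, uₙ₋₁` are dual to
the `ψⱼ`, then `Ψ (x ∧ u₀ ∧ ⋯ ∧ uₙ₋₁) = x`, so `Ψ` maps onto `L`. Finally `⋀ⁿ⁺¹ V` and `L` are both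
free of rank one, and a surjection between isomorphic finite modules over a commutative ring is
injective (Orzech's theorem).
-/

open Module

section Cofactor

variable {R M : Type*} [CommRing R] [AddCommGroup M] [Module R M] {n : ℕ}

noncomputable def cofactorCombination (ψ : Fin n → M →ₗ[R] R) (v : Fin (n + 1) → M) : M :=
  ∑ i : Fin (n + 1),
    ((-1 : R) ^ (i : ℕ) *
      Matrix.det (Matrix.of fun (j : Fin n) (k : Fin n) => ψ j (v (i.succAbove k)))) • v i

theorem apply_cofactorCombination (ψ : Fin n → M →ₗ[R] R) (φ : M →ₗ[R] R)
    (v : Fin (n + 1) → M) :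
    φ (cofactorCombination ψ v) =
      Matrix.det (Matrix.of fun r c => (Fin.cons φ ψ : Fin (n + 1) → M →ₗ[R] R) r (v c)) := by
  rw [Matrix.det_succ_row_zero, cofactorCombination, map_sum]
  refine Finset.sum_congr rfl fun i _ => ?_
  have hminor : (Matrix.of fun r c => (Fin.cons φ ψ : Fin (n + 1) → M →ₗ[R] R) r (v c)).submatrix
      Fin.succ i.succAbove = Matrix.of fun j k => ψ j (v (i.succAbove k)) := by
    ext; simp
  rw [hminor, map_smul, smul_eq_mul, Matrix.of_apply, Fin.cons_zero]
  ring

theorem apply_cofactorCombination_self (ψ : Fin n → M →ₗ[R] R) (v : Fin (n + 1) → M)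
    (j : Fin n) : ψ j (cofactorCombination ψ v) = 0 := by
  rw [apply_cofactorCombination]
  exact Matrix.det_zero_of_row_eq (Fin.succ_ne_zero j).symm (by ext; simp)

theorem cofactorCombination_cons (ψ : Fin n → M →ₗ[R] R) {x : M} (hx : ∀ j, ψ j x = 0)
    {u : Fin n → M} (hu : ∀ j k, ψ j (u k) = if j = k then 1 else 0) :
    cofactorCombination ψ (Fin.cons x u) = x := by
  have hA₀ : (Matrix.of fun j k => ψ j (u k)) = 1 := by
    ext j k; simp [hu, Matrix.one_apply]
  have hA (i : Fin n) : Matrix.det (Matrix.of fun j k =>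
      ψ j ((Fin.cons x u : Fin (n + 1) → M) (i.succ.succAbove k))) = 0 := by
    refine Matrix.det_eq_zero_of_column_eq_zero ⟨0, i.pos⟩ fun j => ?_
    rw [Matrix.of_apply, Fin.succAbove_of_castSucc_lt _ _ (by simp [Fin.lt_def])]
    exact hx j
  simp [cofactorCombination, Fin.sum_univ_succ, hA, hA₀]

end Cofactor

instance Set.powersetCard.instUniqueFinSelf (m : ℕ) : Unique (Set.powersetCard (Fin m) m) where
  default := ⟨Finset.univ, by simp [Set.powersetCard.mem_iff]⟩
  uniq s := Subtype.ext (Finset.eq_univ_of_card _ (by simp))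

namespace Module.Basis

variable {R Q ι : Type*} [CommRing R] [AddCommGroup Q] [Module R Q]

theorem eq_zero_of_forall_apply_eq_zero [Projective R Q] (B : Basis ι R (Dual R Q)) {q : Q}
    (h : ∀ i, B i q = 0) : q = 0 :=
  (forall_dual_apply_eq_zero_iff R q).mp fun φ =>
    LinearMap.congr_fun (B.ext (f₁ := Dual.eval R Q q) (f₂ := 0) h) φ

theorem exists_apply_eq_ite [IsReflexive R Q] [Finite ι] [DecidableEq ι]
    (B : Basis ι R (Dual R Q)) : ∃ q : ι → Q, ∀ i k, B i (q k) = if i = k then 1 else 0 :=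
  ⟨fun k => (evalEquiv R Q).symm (B.dualBasis k), fun i k => by
    rw [← Dual.eval_apply, ← evalEquiv_apply (R := R), LinearEquiv.apply_symm_apply,
      dualBasis_apply_self]⟩

noncomputable def topExteriorPower {m : ℕ} (b : Basis (Fin m) R Q) :
    Basis (Fin 1) R (⋀[R]^m Q) :=
  (b.exteriorPower m).reindex (Equiv.ofUnique _ _)

end Module.Basis

theorem stmt1_general {R : Type*} [CommRing R] {V : Type*} [AddCommGroup V] [Module R V]
    (n : ℕ) (bV : Module.Basis (Fin (n + 1)) R V)
    (L : Submodule R V)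
    (bL : Module.Basis (Fin 1) R L) (bQ : Module.Basis (Fin n) R (V ⧸ L))
    (ψ : Fin n → (V →ₗ[R] R))
    (hker : ∀ j, L ≤ LinearMap.ker (ψ j))
    (hbasis : ∃ B : Module.Basis (Fin n) R (Module.Dual R (V ⧸ L)),
      ∀ j, B j = L.liftQ (ψ j) (hker j))
    (Ψ : (⋀[R]^(n + 1) V) →ₗ[R] V)
    (hΨ : ∀ v : Fin (n + 1) → V,
      Ψ ⟨ExteriorAlgebra.ιMulti R (n + 1) v,
          ExteriorAlgebra.ιMulti_range R (n + 1) ⟨v, rfl⟩⟩ =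
        ∑ i : Fin (n + 1),
          ((-1 : R) ^ (i : ℕ) *
            Matrix.det (Matrix.of fun (j : Fin n) (k : Fin n) => ψ j (v (i.succAbove k)))) •
          v i) :
    Function.Injective Ψ ∧ LinearMap.range Ψ = L := by
  classical
  obtain ⟨B, hB⟩ := hbasis
  have hBψ (j : Fin n) (x : V) : B j (L.mkQ x) = ψ j x := by rw [hB]; rfl
  have : Module.Free R (V ⧸ L) := .of_basis bQ
  have : Module.Finite R (V ⧸ L) := .of_basis bQ
  have hΨ' : ∀ v, Ψ (exteriorPower.ιMulti R (n + 1) v) = cofactorCombination ψ v := hΨ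
  have hmemL (x : V) (hx : ∀ j, ψ j x = 0) : x ∈ L := by
    rw [← Submodule.Quotient.mk_eq_zero]
    exact B.eq_zero_of_forall_apply_eq_zero fun j => (hBψ j x).trans (hx j)
  obtain ⟨q, hq⟩ := B.exists_apply_eq_ite
  choose u hu using fun k => L.mkQ_surjective (q k)
  have hdual (j k : Fin n) : ψ j (u k) = if j = k then 1 else 0 := by rw [← hBψ, hu, hq]
  have hrange : LinearMap.range Ψ = L := by
    refine le_antisymm ?_ fun x hx =>
      ⟨_, (hΨ' _).trans (cofactorCombination_cons ψ (fun j => hker j hx) hdual)⟩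
    rw [LinearMap.range_eq_map, ← exteriorPower.ιMulti_span, Submodule.map_span_le]
    rintro _ ⟨v, rfl⟩
    exact hΨ' v ▸ hmemL _ (apply_cofactorCombination_self ψ v)
  refine ⟨fun x y hxy => ?_, hrange⟩
  have hsurj : Function.Surjective (Ψ.codRestrict L fun x => hrange ▸ ⟨x, rfl⟩) := by
    rintro ⟨y, hy⟩
    obtain ⟨x, rfl⟩ := hrange.ge hy
    exact ⟨x, rfl⟩
  have : Module.Finite R L := .of_basis bL
  exact OrzechProperty.injective_of_surjective_of_injective
    (bV.topExteriorPower.equiv bL (Equiv.refl _)).toLinearMap _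
    (LinearEquiv.injective _) hsurj (Subtype.ext hxy)

/-- Setup as in Statement 0 (with `r = n + 1 ≥ 1`):  `V` free of rank `r`,
`L ⊆ V` a direct summand, free of rank 1, with `V/L` free of rank `r - 1`, and functionals
`ψ 0, …, ψ (r-2)` vanishing on `L` inducing a basis of `Hom_R(V/L, R)`.
Let `Ψ : ⋀^r V → V` be the linear map induced by the alternating multilinear map
`(v 0, …, v (r-1)) ↦ ∑ i, (-1)^i • det (A i) • v i`, where `(A i) j k = ψ j (v (σ i k))`
and `σ i = Fin.succAbove i` is the increasing enumeration of `{0, …, r-1} \ {i}`.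
Then `Ψ` is injective with image exactly `L`; in particular `⋀^r V ≅ L`. -/
theorem stmt1 {R : Type*} [CommRing R] {V : Type*} [AddCommGroup V] [Module R V]
    (n : ℕ) (bV : Module.Basis (Fin (n + 1)) R V)
    (L : Submodule R V) (hsum : ∃ W : Submodule R V, IsCompl L W)
    (bL : Module.Basis (Fin 1) R L) (bQ : Module.Basis (Fin n) R (V ⧸ L))
    (ψ : Fin n → (V →ₗ[R] R))
    (hker : ∀ j, L ≤ LinearMap.ker (ψ j))
    (hbasis : ∃ B : Module.Basis (Fin n) R (Module.Dual R (V ⧸ L)),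
      ∀ j, B j = L.liftQ (ψ j) (hker j))
    (Ψ : (⋀[R]^(n + 1) V) →ₗ[R] V)
    (hΨ : ∀ v : Fin (n + 1) → V,
      Ψ ⟨ExteriorAlgebra.ιMulti R (n + 1) v,
          ExteriorAlgebra.ιMulti_range R (n + 1) ⟨v, rfl⟩⟩ =
        ∑ i : Fin (n + 1),
          ((-1 : R) ^ (i : ℕ) *
            Matrix.det (Matrix.of fun (j : Fin n) (k : Fin n) => ψ j (v (i.succAbove k)))) •
          v i) :
    Function.Injective Ψ ∧ LinearMap.range Ψ = L :=
  stmt1_general n bV L bL bQ ψ hker hbasis Ψ hΨ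
end

section
/- Let R be a commutative ring, let g : A → B be an R-linear map of R-modules, and let a ∈ R be an element such that a·B is contained in the image of g. Then for every k ≥ 1, a^k · (⋀^k B) is contained in the image of the induced map ⋀^k g : ⋀^k A → ⋀^k B on k-th exterior powers. -/
/-!
`⋀^k B` is spanned by the products `v₁ ∧ ⋯ ∧ v_k`. Choosing preimages `a • vᵢ = g wᵢ`, the
multilinearity of `∧` gives `a ^ k • (v₁ ∧ ⋯ ∧ v_k) = g w₁ ∧ ⋯ ∧ g w_k`, which is the image of
`w₁ ∧ ⋯ ∧ w_k ∈ ⋀^k A`; the set of `x` with `a ^ k • x` in that image is a submodule.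
-/

namespace ExteriorAlgebra

variable {R : Type*} [CommRing R] {A B : Type*} [AddCommGroup A] [Module R A]
  [AddCommGroup B] [Module R B]

theorem ιMulti_smul_const {k : ℕ} (a : R) (v : Fin k → B) :
    ιMulti R k (fun i => a • v i) = a ^ k • ιMulti R k v := by
  simpa using (ιMulti R k).map_smul_univ (fun _ => a) v

theorem ιMulti_comp_mem_map_exteriorPower (g : A →ₗ[R] B) {k : ℕ} (w : Fin k → A) :
    ιMulti R k (g ∘ w) ∈ Submodule.map (map g).toLinearMap (⋀[R]^k A) :=
  ⟨ιMulti R k w, ιMulti_range R k ⟨w, rfl⟩, map_apply_ιMulti g w⟩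

theorem exteriorPower_le_comap_smul_pow_map (g : A →ₗ[R] B) {a : R}
    (ha : ∀ b : B, a • b ∈ LinearMap.range g) (k : ℕ) :
    ⋀[R]^k B ≤ (Submodule.map (map g).toLinearMap (⋀[R]^k A)).comap (a ^ k • LinearMap.id) := by
  rw [← ιMulti_span_fixedDegree, Submodule.span_le]
  rintro _ ⟨v, rfl⟩
  choose w hw using fun i => ha (v i)
  have hgw : g ∘ w = fun i => a • v i := funext hw
  simpa [← ιMulti_smul_const, ← hgw] using ιMulti_comp_mem_map_exteriorPower g w

end ExteriorAlgebra

/-- Let `R` be a commutative ring, `g : A → B` an `R`-linear map, and `a ∈ R`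
with `a • B ⊆ im g`.  Then for every `k ≥ 1`, `a^k • (⋀^k B)` is contained in the image of the
induced map `⋀^k g : ⋀^k A → ⋀^k B`.  Here `⋀^k A` is realized as the `k`-th exterior power
submodule of the exterior algebra, and the image of `⋀^k g` is the image of `⋀^k A` under the
algebra map induced by `g` (which is determined by `m₁ ∧ ⋯ ∧ m_k ↦ g m₁ ∧ ⋯ ∧ g m_k`). -/
theorem stmt4 {R : Type*} [CommRing R]
    {A B : Type*} [AddCommGroup A] [Module R A] [AddCommGroup B] [Module R B]
    (g : A →ₗ[R] B) (a : R) (ha : ∀ b : B, a • b ∈ LinearMap.range g) :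
    ∀ k : ℕ, 1 ≤ k → ∀ x ∈ ⋀[R]^k B,
      a ^ k • x ∈ Submodule.map (ExteriorAlgebra.map g).toLinearMap (⋀[R]^k A) :=
  fun k _ _ hx => ExteriorAlgebra.exteriorPower_le_comap_smul_pow_map g ha k hx
end

section
/- Let R be an integral domain and let f : M → N be an injective R-linear map between free R-modules of the same finite rank r. Then for every k with 0 ≤ k ≤ r, the induced map ⋀^k f : ⋀^k M → ⋀^k N on k-th exterior powers is injective. -/
/-!
In bases, the adjugate of the matrix of `f` gives `g : N →ₗ M` with `g ∘ f = det • id`, and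
`det ≠ 0` because `f` is injective and `R` is a domain. By functoriality `⋀^k g ∘ ⋀^k f` is
multiplication by `det ^ k`, which is injective since `⋀^k M` is free, hence torsion-free.
-/

open Function

namespace exteriorPower

variable {R M N : Type*} [CommRing R] [AddCommGroup M] [Module R M] [AddCommGroup N] [Module R N]

theorem coe_map (k : ℕ) (f : M →ₗ[R] N) (x : ⋀[R]^k M) :
    (map k f x : ExteriorAlgebra R N) = ExteriorAlgebra.map f x := by
  suffices (⋀[R]^k N).subtype ∘ₗ map k f =
      (ExteriorAlgebra.map f).toLinearMap ∘ₗ (⋀[R]^k M).subtype from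
    LinearMap.congr_fun this x
  ext m
  simp [ExteriorAlgebra.map_apply_ιMulti]

theorem map_smul_id (k : ℕ) (c : R) :
    map k (c • LinearMap.id : M →ₗ[R] M) = c ^ k • LinearMap.id := by
  ext m
  simpa [comp_def] using
    congrArg Subtype.val ((ιMulti R k (M := M)).map_smul_univ (fun _ => c) m)

theorem map_injective_of_comp_eq_smul_id [IsDomain R] [Module.Free R M] (k : ℕ)
    {f : M →ₗ[R] N} {g : N →ₗ[R] M} {c : R} (hc : c ≠ 0) (hgf : g ∘ₗ f = c • LinearMap.id) :
    Injective (map k f) := by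
  have hmap : map k g ∘ₗ map k f = c ^ k • LinearMap.id := by
    rw [← map_comp, hgf, map_smul_id]
  refine Injective.of_comp (f := map k g) ?_
  rw [← LinearMap.coe_comp, hmap]
  exact smul_right_injective _ (pow_ne_zero k hc)

end exteriorPower

theorem ExteriorAlgebra.injOn_map_iff_injective_exteriorPower_map {R M N : Type*} [CommRing R]
    [AddCommGroup M] [Module R M] [AddCommGroup N] [Module R N] (k : ℕ) (f : M →ₗ[R] N) :
    Set.InjOn (ExteriorAlgebra.map f).toLinearMap (⋀[R]^k M : Submodule R _) ↔
      Injective (exteriorPower.map k f) := by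
  have hrestrict :
      (⋀[R]^k M : Set (ExteriorAlgebra R M)).domRestrict (ExteriorAlgebra.map f).toLinearMap =
      Subtype.val ∘ exteriorPower.map k f :=
    funext fun x => (exteriorPower.coe_map k f x).symm
  rw [Set.injOn_iff_injective, hrestrict, Subtype.val_injective.of_comp_iff]

namespace LinearMap

variable {R M N ι : Type*} [CommRing R] [AddCommGroup M] [Module R M] [AddCommGroup N]
  [Module R N] [Fintype ι] [DecidableEq ι] (bM : Module.Basis ι R M) (bN : Module.Basis ι R N)

theorem det_toMatrix_ne_zero_of_injective [IsDomain R] {f : M →ₗ[R] N} (hf : Injective f) :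
    (toMatrix bM bN f).det ≠ 0 := by
  have hinj : Injective (Matrix.toLin' (toMatrix bM bN f)) := by
    rw [toMatrix, LinearEquiv.trans_apply, Matrix.toLin'_toMatrix']
    exact bN.equivFun.injective.comp (hf.comp bM.equivFun.symm.injective)
  rwa [← det_toLin', Ne, det_eq_zero_iff_ker_ne_bot, not_not, ker_eq_bot]

theorem toLin_adjugate_toMatrix_comp (f : M →ₗ[R] N) :
    Matrix.toLin bN bM (toMatrix bM bN f).adjugate ∘ₗ f = (toMatrix bM bN f).det • LinearMap.id := by
  apply (toMatrix bM bM).injective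
  rw [toMatrix_comp bM bN bM, toMatrix_toLin, Matrix.adjugate_mul, map_smul, toMatrix_id]

end LinearMap

/-- Let `R` be an integral domain and `f : M → N` an injective `R`-linear map
between free `R`-modules of the same finite rank `r`.  Then for every `0 ≤ k ≤ r` the induced
map `⋀^k f : ⋀^k M → ⋀^k N` is injective.  Here `⋀^k M` is realized as the `k`-th exterior
power submodule of the exterior algebra, and `⋀^k f` as the restriction to it of the algebra
map induced by `f` (which is determined by `m₁ ∧ ⋯ ∧ m_k ↦ f m₁ ∧ ⋯ ∧ f m_k`), so that
injectivity of `⋀^k f` is `Set.InjOn` of that algebra map on `⋀^k M`. -/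
theorem stmt7 {R : Type*} [CommRing R] [IsDomain R]
    {M N : Type*} [AddCommGroup M] [Module R M] [AddCommGroup N] [Module R N]
    (r : ℕ) (bM : Module.Basis (Fin r) R M) (bN : Module.Basis (Fin r) R N)
    (f : M →ₗ[R] N) (hf : Function.Injective f) :
    ∀ k : ℕ, k ≤ r →
      Set.InjOn (ExteriorAlgebra.map f).toLinearMap (⋀[R]^k M : Submodule R _) := by
  intro k _
  have : Module.Free R M := .of_basis bM
  rw [ExteriorAlgebra.injOn_map_iff_injective_exteriorPower_map]
  exact exteriorPower.map_injective_of_comp_eq_smul_id k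
    (LinearMap.det_toMatrix_ne_zero_of_injective bM bN hf)
    (LinearMap.toLin_adjugate_toMatrix_comp bM bN f)
end
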